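/- arXiv:1910.12139 — 3 statements merged into one kernel-verified Lean document; each statement's English description precedes it below -/
import Mathlib

section
/- Let G be a finite simple graph on n vertices with eigenvalues λ_1 ≥ λ_2 ≥ … ≥ λ_n of its adjacency matrix, where λ_1 is the largest eigenvalue. Then EE(G) ≥ e^{λ_1} + (n − 1) − λ_1, with equality if and only if G has no edges (G is the empty graph on n vertices). -/
/-! Since `∑ λᵢ = tr A = 0`, summing `e^t - (t + 1) ≥ 0` over the spectrum gives
`EE(G) - n = ∑ (e^{λᵢ} - (λᵢ + 1))`; dropping every term but `i = 1` yields the bound. Equality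
forces `λᵢ = 0` for `i ≠ 1`, hence also `λ₁ = -∑_{i ≠ 1} λᵢ = 0`, and a Hermitian matrix with
zero spectrum is zero. -/

open Finset Real

namespace EstradaIndexPaper

/-- The adjacency matrix of a simple graph over `ℝ` is Hermitian. -/
theorem adjMatrix_isHermitian {n : ℕ} (G : SimpleGraph (Fin n)) [DecidableRel G.Adj] :
    (G.adjMatrix ℝ).IsHermitian := by
  unfold Matrix.IsHermitian
  rw [Matrix.conjTranspose_eq_transpose_of_trivial]
  exact G.isSymm_adjMatrix

/-- The eigenvalues of the adjacency matrix of `G`. -/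
noncomputable def eig {n : ℕ} (G : SimpleGraph (Fin n)) [DecidableRel G.Adj] : Fin n → ℝ :=
  (adjMatrix_isHermitian G).eigenvalues

/-- The Estrada index of `G`: the sum of `e^{λ_i}` over the adjacency eigenvalues. -/
noncomputable def EE {n : ℕ} (G : SimpleGraph (Fin n)) [DecidableRel G.Adj] : ℝ :=
  ∑ i, Real.exp (eig G i)

/-- The largest adjacency eigenvalue `λ₁` of `G`. -/
noncomputable def lam1 {n : ℕ} (G : SimpleGraph (Fin n)) [DecidableRel G.Adj] : ℝ :=
  ⨆ i, eig G i

/-- The Randić index `R(G) = Σ_{ij ∈ E(G)} (d(i)d(j))^{-1/2}`. -/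
noncomputable def randic {n : ℕ} (G : SimpleGraph (Fin n)) [DecidableRel G.Adj] : ℝ :=
  ∑ e ∈ G.edgeFinset,
    Sym2.lift ⟨fun i j => (Real.sqrt ((G.degree i : ℝ) * (G.degree j : ℝ)))⁻¹,
      fun i j => by simp [mul_comm]⟩ e

/-- The general Randić index `R_{1/2}(G) = Σ_{ij ∈ E(G)} (d(i)d(j))^{1/2}`. -/
noncomputable def randicHalf {n : ℕ} (G : SimpleGraph (Fin n)) [DecidableRel G.Adj] : ℝ :=
  ∑ e ∈ G.edgeFinset,
    Sym2.lift ⟨fun i j => Real.sqrt ((G.degree i : ℝ) * (G.degree j : ℝ)),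
      fun i j => by simp [mul_comm]⟩ e

theorem _root_.Real.add_one_eq_exp_iff {t : ℝ} : t + 1 = Real.exp t ↔ t = 0 :=
  ⟨fun h => by_contra fun ht => (Real.add_one_lt_exp ht).ne h, fun h => by simp [h]⟩

section

variable {ι : Type*} [Fintype ι] {x : ι → ℝ}

theorem sum_exp_sub_eq_sum_erase [DecidableEq ι] (hx : ∑ i, x i = 0) (i₀ : ι) :
    ∑ i, Real.exp (x i) - (Real.exp (x i₀) + (Fintype.card ι - 1) - x i₀) =
      ∑ i ∈ univ.erase i₀, (Real.exp (x i) - (x i + 1)) := by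
  have hfull : ∑ i, (Real.exp (x i) - (x i + 1)) = ∑ i, Real.exp (x i) - Fintype.card ι := by
    simp [sum_sub_distrib, sum_add_distrib, hx]
  rw [← add_sum_erase _ _ (mem_univ i₀)] at hfull
  linarith

theorem exp_add_card_sub_one_sub_le_sum_exp (hx : ∑ i, x i = 0) (i₀ : ι) :
    Real.exp (x i₀) + (Fintype.card ι - 1) - x i₀ ≤ ∑ i, Real.exp (x i) := by
  classical
  have hgap := sum_exp_sub_eq_sum_erase hx i₀
  have hnonneg : 0 ≤ ∑ i ∈ univ.erase i₀, (Real.exp (x i) - (x i + 1)) :=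
    sum_nonneg fun i _ => sub_nonneg.2 (Real.add_one_le_exp _)
  linarith

theorem sum_exp_eq_exp_add_card_sub_one_sub_iff (hx : ∑ i, x i = 0) (i₀ : ι) :
    ∑ i, Real.exp (x i) = Real.exp (x i₀) + (Fintype.card ι - 1) - x i₀ ↔ x = 0 := by
  classical
  refine ⟨fun h => ?_, fun h => by simp [h]⟩
  have hgap : ∑ i ∈ univ.erase i₀, (Real.exp (x i) - (x i + 1)) = 0 := by
    rw [← sum_exp_sub_eq_sum_erase hx i₀, h, sub_self]
  have hrest : ∀ i ∈ univ.erase i₀, x i = 0 := fun i hi =>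
    have hterms := sum_eq_zero_iff_of_nonneg fun i _ => sub_nonneg.2 (Real.add_one_le_exp (x i))
    Real.add_one_eq_exp_iff.1 (sub_eq_zero.1 (hterms.1 hgap i hi)).symm
  have hi₀ : x i₀ = 0 := by
    rwa [← add_sum_erase _ _ (mem_univ i₀), sum_eq_zero hrest, add_zero] at hx
  ext i
  obtain rfl | hi := eq_or_ne i i₀
  · exact hi₀
  · exact hrest i (mem_erase.2 ⟨hi, mem_univ i⟩)

-- For empty `ι` the real `⨆` is the junk value `0`, and both sides vanish.
theorem exp_iSup_add_card_sub_one_sub_iSup_le_sum_exp (hx : ∑ i, x i = 0) :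
    Real.exp (⨆ i, x i) + (Fintype.card ι - 1) - ⨆ i, x i ≤ ∑ i, Real.exp (x i) := by
  cases isEmpty_or_nonempty ι
  · simp [Real.iSup_of_isEmpty]
  · obtain ⟨i₀, hi₀⟩ := exists_eq_ciSup_of_finite (f := x)
    rw [← hi₀]
    exact exp_add_card_sub_one_sub_le_sum_exp hx i₀

theorem sum_exp_eq_exp_iSup_add_card_sub_one_sub_iSup_iff (hx : ∑ i, x i = 0) :
    ∑ i, Real.exp (x i) = Real.exp (⨆ i, x i) + (Fintype.card ι - 1) - ⨆ i, x i ↔ x = 0 := by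
  cases isEmpty_or_nonempty ι
  · simp [Real.iSup_of_isEmpty, funext_iff]
  · obtain ⟨i₀, hi₀⟩ := exists_eq_ciSup_of_finite (f := x)
    rw [← hi₀]
    exact sum_exp_eq_exp_add_card_sub_one_sub_iff hx i₀

end

theorem _root_.SimpleGraph.adjMatrix_eq_zero_iff {V α : Type*} [MulZeroOneClass α] [Nontrivial α]
    (G : SimpleGraph V) [DecidableRel G.Adj] : G.adjMatrix α = 0 ↔ G = ⊥ := by
  refine ⟨fun h => ?_, fun h => ?_⟩
  · ext v w
    simpa [SimpleGraph.adjMatrix_apply] using congrFun₂ h v w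
  · subst h
    ext v w
    simp [SimpleGraph.adjMatrix_apply]

theorem sum_eig_eq_zero {n : ℕ} (G : SimpleGraph (Fin n)) [DecidableRel G.Adj] :
    ∑ i, eig G i = 0 := by
  have := (adjMatrix_isHermitian G).trace_eq_sum_eigenvalues
  rw [SimpleGraph.trace_adjMatrix] at this
  exact_mod_cast this.symm

theorem eig_eq_zero_iff {n : ℕ} (G : SimpleGraph (Fin n)) [DecidableRel G.Adj] :
    eig G = 0 ↔ G = ⊥ :=
  (adjMatrix_isHermitian G).eigenvalues_eq_zero_iff.trans G.adjMatrix_eq_zero_iff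

theorem stmt0 {n : ℕ} (G : SimpleGraph (Fin n)) [DecidableRel G.Adj] :
    EE G ≥ Real.exp (lam1 G) + ((n : ℝ) - 1) - lam1 G ∧
    (EE G = Real.exp (lam1 G) + ((n : ℝ) - 1) - lam1 G ↔ G = ⊥) := by
  have hcard : (Fintype.card (Fin n) : ℝ) = n := by rw [Fintype.card_fin]
  rw [EE, lam1, ← eig_eq_zero_iff, ← hcard]
  exact ⟨exp_iSup_add_card_sub_one_sub_iSup_le_sum_exp (sum_eig_eq_zero G),
    sum_exp_eq_exp_iSup_add_card_sub_one_sub_iSup_iff (sum_eig_eq_zero G)⟩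

end EstradaIndexPaper
end

section
/- Let G be a connected finite simple graph on n ≥ 2 vertices with m edges and Randić index R = R(G). Then EE(G) > e^{m/R} + (n − 1) − m/R. -/
/-! The Rayleigh quotient of the vector `(√d(i))ᵢ` is `R_{1/2}(G)/m`, and Cauchy–Schwarz gives
`m² ≤ R_{1/2}(G) R(G)`, so `λ₁ ≥ m/R`. The eigenvalues sum to `tr A = 0`, so bounding
`e^{λᵢ} ≥ 1 + λᵢ` for `i ≠ 1` (strictly for some `i`, as `A ≠ 0`) gives
`EE(G) > e^{λ₁} + (n - 1) - λ₁`, and `x ↦ eˣ - x` is increasing on `[0, ∞)`. -/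

open Finset Real

namespace EstradaIndexPaper

open Matrix

theorem _root_.Finset.card_sq_le_sum_mul_sum_inv {ι K : Type*} [Field K] [LinearOrder K]
    [IsStrictOrderedRing K] (s : Finset ι) {f : ι → K} (hf : ∀ i ∈ s, 0 < f i) :
    (#s : K) ^ 2 ≤ (∑ i ∈ s, f i) * ∑ i ∈ s, (f i)⁻¹ := by
  simpa using sum_sq_le_sum_mul_sum_of_sq_le_mul s (r := 1) (fun i hi => (hf i hi).le)
    (fun i hi => (inv_pos.2 (hf i hi)).le)
    (fun i hi => by simp [mul_inv_cancel₀ (hf i hi).ne'])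

theorem _root_.Real.exp_sub_le_exp_sub {a b : ℝ} (ha : 0 ≤ a) (hab : a ≤ b) :
    exp a - a ≤ exp b - b := by
  have hexp : exp b = exp a * exp (b - a) := by rw [← exp_add, add_sub_cancel]
  nlinarith [add_one_le_exp (b - a), one_le_exp ha]

theorem _root_.Real.exp_add_card_sub_one_sub_lt_sum_exp {ι : Type*} [Fintype ι] [DecidableEq ι]
    {l : ι → ℝ} (hsum : ∑ i, l i = 0) (hl : l ≠ 0) (i₀ : ι) :
    exp (l i₀) + (Fintype.card ι - 1) - l i₀ < ∑ i, exp (l i) := by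
  obtain ⟨j, hj, hlj⟩ : ∃ j ∈ univ.erase i₀, l j ≠ 0 := by
    by_contra! h
    apply hl
    ext i
    rcases eq_or_ne i i₀ with rfl | hi
    · rwa [← add_sum_erase _ _ (mem_univ i), sum_eq_zero h, add_zero] at hsum
    · exact h i (mem_erase.2 ⟨hi, mem_univ i⟩)
  have hrest : ∑ i ∈ univ.erase i₀, (l i + 1) < ∑ i ∈ univ.erase i₀, exp (l i) :=
    sum_lt_sum (fun i _ => add_one_le_exp _) ⟨j, hj, add_one_lt_exp hlj⟩
  rw [sum_add_distrib, sum_erase_eq_sub (mem_univ i₀), hsum, sum_const, card_erase_of_mem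
    (mem_univ i₀), card_univ, nsmul_one,
    Nat.cast_pred (Fintype.card_pos_iff.2 ⟨i₀⟩)] at hrest
  rw [← add_sum_erase _ _ (mem_univ i₀)]
  linarith

theorem _root_.Matrix.IsHermitian.dotProduct_mulVec_le_iSup_eigenvalues_mul {ι : Type*}
    [Fintype ι] [DecidableEq ι] {A : Matrix ι ι ℝ} (hA : A.IsHermitian) (v : ι → ℝ) :
    v ⬝ᵥ A *ᵥ v ≤ (⨆ i, hA.eigenvalues i) * (v ⬝ᵥ v) := by
  set U : Matrix ι ι ℝ := (hA.eigenvectorUnitary : Matrix ι ι ℝ)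
  set c : ι → ℝ := v ᵥ* U
  have hstar : star U *ᵥ v = c := by
    rw [star_eq_conjTranspose, conjTranspose_eq_transpose_of_trivial, mulVec_transpose]
  have hdot : ∀ x, v ⬝ᵥ U *ᵥ x = c ⬝ᵥ x := fun x => dotProduct_mulVec v U x
  have hAv : v ⬝ᵥ A *ᵥ v = ∑ i, hA.eigenvalues i * (c i * c i) := by
    conv_lhs => rw [hA.spectral_theorem, Unitary.conjStarAlgAut_apply]
    rw [← mulVec_mulVec, ← mulVec_mulVec, hstar, hdot]
    simp only [dotProduct, mulVec_diagonal, Function.comp_apply, RCLike.ofReal_real_eq_id, id]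
    exact sum_congr rfl fun i _ => by ring
  have hvv : v ⬝ᵥ v = ∑ i, c i * c i := by
    have hv : v = U *ᵥ c := by
      rw [← hstar, mulVec_mulVec, show U * star U = 1 from Unitary.coe_mul_star_self _,
        one_mulVec]
    nth_rewrite 2 [hv]
    exact hdot c
  rw [hAv, hvv, mul_sum]
  exact sum_le_sum fun i _ => mul_le_mul_of_nonneg_right
    (le_ciSup (Set.finite_range _).bddAbove i) (mul_self_nonneg _)

section Graph

variable {V : Type*} (G : SimpleGraph V) [Fintype V] [DecidableRel G.Adj]

theorem _root_.SimpleGraph.sum_dart_edge {M : Type*} [AddCommMonoid M] (g : Sym2 V → M) :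
    ∑ d : G.Dart, g d.edge = 2 • ∑ e ∈ G.edgeFinset, g e := by
  classical
  rw [← sum_fiberwise_of_maps_to (g := SimpleGraph.Dart.edge) (t := G.edgeFinset)
    (fun d _ => G.mem_edgeFinset.2 d.edge_mem), smul_sum]
  refine sum_congr rfl fun e he => ?_
  rw [sum_congr rfl fun d hd => congrArg g (mem_filter.1 hd).2, sum_const,
    G.dart_edge_fiber_card e (G.mem_edgeFinset.1 he)]

theorem _root_.SimpleGraph.sum_dart_eq_sum_adj {M : Type*} [AddCommMonoid M]
    (f : V → V → M) :
    ∑ d : G.Dart, f d.fst d.snd = ∑ i, ∑ j, if G.Adj i j then f i j else 0 := by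
  rw [← Fintype.sum_prod_type' (f := fun i j => if G.Adj i j then f i j else 0), ← sum_filter]
  exact sum_bij (fun d _ => d.toProd) (fun d _ => by simp)
    (fun d _ d' _ h => SimpleGraph.Dart.ext _ _ h)
    (fun p hp => ⟨⟨p, (mem_filter.1 hp).2⟩, mem_univ _, rfl⟩) (fun _ _ => rfl)

noncomputable def sqrtDegreeMul : Sym2 V → ℝ :=
  Sym2.lift ⟨fun i j => √((G.degree i : ℝ) * G.degree j), fun i j => by simp [mul_comm]⟩

theorem sqrtDegreeMul_pos {e : Sym2 V} (he : e ∈ G.edgeFinset) : 0 < sqrtDegreeMul G e := by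
  induction e using Sym2.ind with
  | _ a b =>
    have hab : G.Adj a b := G.mem_edgeFinset.1 he
    have ha := G.degree_pos_iff_exists_adj a |>.2 ⟨b, hab⟩
    have hb := G.degree_pos_iff_exists_adj b |>.2 ⟨a, hab.symm⟩
    exact sqrt_pos.2 (by positivity)

theorem dotProduct_sqrt_degree_mulVec_adjMatrix :
    (fun i => √(G.degree i : ℝ)) ⬝ᵥ G.adjMatrix ℝ *ᵥ (fun i => √(G.degree i : ℝ)) =
      2 * ∑ e ∈ G.edgeFinset, sqrtDegreeMul G e := by
  rw [SimpleGraph.dotProduct_mulVec_adjMatrix,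
    ← G.sum_dart_eq_sum_adj (f := fun i j => √(G.degree i : ℝ) * √(G.degree j : ℝ)),
    ← Nat.cast_ofNat, ← nsmul_eq_mul, ← G.sum_dart_edge]
  refine sum_congr rfl fun d _ => ?_
  rw [sqrtDegreeMul, SimpleGraph.Dart.edge, Sym2.lift_mk]
  exact (sqrt_mul (Nat.cast_nonneg _) _).symm

theorem dotProduct_sqrt_degree_self :
    (fun i => √(G.degree i : ℝ)) ⬝ᵥ (fun i => √(G.degree i : ℝ)) = 2 * #G.edgeFinset := by
  simp only [dotProduct, mul_self_sqrt (Nat.cast_nonneg _)]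
  exact_mod_cast G.sum_degrees_eq_twice_card_edges

end Graph

section Spectrum

variable {n : ℕ} (G : SimpleGraph (Fin n)) [DecidableRel G.Adj]

theorem randicHalf_eq_sum_sqrtDegreeMul :
    randicHalf G = ∑ e ∈ G.edgeFinset, sqrtDegreeMul G e := rfl

theorem randic_eq_sum_inv_sqrtDegreeMul :
    randic G = ∑ e ∈ G.edgeFinset, (sqrtDegreeMul G e)⁻¹ := by
  refine sum_congr rfl fun e _ => ?_
  induction e using Sym2.ind with
  | _ a b => rfl

theorem sum_eig : ∑ i, eig G i = 0 := by
  simpa [eig] using (adjMatrix_isHermitian G).trace_eq_sum_eigenvalues.symm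

theorem eig_ne_zero (h : G.edgeFinset.Nonempty) : eig G ≠ 0 := by
  rw [eig, Ne, (adjMatrix_isHermitian G).eigenvalues_eq_zero_iff]
  obtain ⟨e, he⟩ := h
  induction e using Sym2.ind with
  | _ a b =>
    have hab : G.Adj a b := G.mem_edgeFinset.1 he
    exact fun h0 => by simpa [hab] using congrFun₂ h0 a b

theorem randicHalf_le_lam1_mul_card : randicHalf G ≤ lam1 G * #G.edgeFinset := by
  have := (adjMatrix_isHermitian G).dotProduct_mulVec_le_iSup_eigenvalues_mul
    fun i => √(G.degree i : ℝ)
  rw [dotProduct_sqrt_degree_mulVec_adjMatrix, dotProduct_sqrt_degree_self] at this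
  rw [randicHalf_eq_sum_sqrtDegreeMul, lam1, eig]
  linarith

theorem randic_pos (h : G.edgeFinset.Nonempty) : 0 < randic G := by
  rw [randic_eq_sum_inv_sqrtDegreeMul]
  exact sum_pos (fun e he => inv_pos.2 (sqrtDegreeMul_pos G he)) h

theorem card_edgeFinset_div_randic_le_lam1 (h : G.edgeFinset.Nonempty) :
    #G.edgeFinset / randic G ≤ lam1 G := by
  have hR := randic_pos G h
  have hm : (0 : ℝ) < #G.edgeFinset := by exact_mod_cast h.card_pos
  have hCS := G.edgeFinset.card_sq_le_sum_mul_sum_inv fun e he => sqrtDegreeMul_pos G he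
  rw [← randicHalf_eq_sum_sqrtDegreeMul, ← randic_eq_sum_inv_sqrtDegreeMul] at hCS
  rw [div_le_iff₀ hR]
  nlinarith [mul_le_mul_of_nonneg_right (randicHalf_le_lam1_mul_card G) hR.le]

end Spectrum

theorem stmt1 {n : ℕ} (hn : 2 ≤ n) (G : SimpleGraph (Fin n)) [DecidableRel G.Adj]
    (hG : G.Connected) (m R : ℝ) (hm : m = G.edgeFinset.card) (hR : R = randic G) :
    EE G > Real.exp (m / R) + ((n : ℝ) - 1) - m / R := by
  subst hm hR
  have := hG.nonempty
  have := Fin.nontrivial_iff_two_le.2 hn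
  have hedge : G.edgeFinset.Nonempty := by
    rw [SimpleGraph.edgeFinset_nonempty]
    rintro rfl
    exact SimpleGraph.not_connected_bot hG
  obtain ⟨i₀, hi₀⟩ : ∃ i, eig G i = lam1 G := exists_eq_ciSup_of_finite
  have hmR₀ : 0 ≤ #G.edgeFinset / randic G := by
    have := randic_pos G hedge
    positivity
  have hmono := exp_sub_le_exp_sub hmR₀ (card_edgeFinset_div_randic_le_lam1 G hedge)
  have hEE := exp_add_card_sub_one_sub_lt_sum_exp (sum_eig G) (eig_ne_zero G hedge) i₀
  rw [Fintype.card_fin, hi₀] at hEE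
  rw [EE]
  linarith

end EstradaIndexPaper
end

section
/- Let G be a connected bipartite finite simple graph on n ≥ 2 vertices. Then EE(G) ≥ 2cosh(2cos(π/(n+1))) + (n − 2), with equality if and only if G is the path P_2 on 2 vertices or the path P_3 on 3 vertices. -/
open Finset Real

/-!
Every odd Taylor polynomial of `exp` lies below `exp`, so `EE G ≥ ∑ᵢ ∑_{j ≤ 5} λᵢʲ / j!`, and the
power sums `∑ᵢ λᵢʲ = tr Aʲ` are known: `n`, `0`, `2m`, `0`, at least `∑ d(v)²`, `0` for a bipartite
graph with `m` edges. Cauchy–Schwarz and `m ≥ n - 1` give `EE G ≥ 2n - 1 + (n - 1)² / (6n)`,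
which beats `2 cosh (2 cos (π / (n + 1))) + n - 2` for every `n ≥ 4`. For `n ≤ 3` the three
power sums `0`, `2(n - 1)`, `0` determine the spectrum `{±√(n - 1), 0, …}`, which gives equality,
and a connected bipartite graph on two or three vertices is a star, that is, a path.
-/

open Finset
open scoped Nat

namespace Real

/-- The Taylor polynomial of `exp` at `0` of degree `n - 1` (it has `n` terms). -/
noncomputable def expTaylor (n : ℕ) (x : ℝ) : ℝ := ∑ i ∈ range n, x ^ i / i !

lemma expTaylor_succ (n : ℕ) (x : ℝ) : expTaylor (n + 1) x = expTaylor n x + x ^ n / n ! :=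
  sum_range_succ _ _

lemma expTaylor_succ_zero (n : ℕ) : expTaylor (n + 1) 0 = 1 := by
  simp [expTaylor, sum_range_succ']

lemma hasDerivAt_expTaylor (n : ℕ) (x : ℝ) :
    HasDerivAt (expTaylor (n + 1)) (expTaylor n x) x := by
  induction n with
  | zero =>
    have : expTaylor 1 = fun _ => 1 := funext fun y => by simp [expTaylor]
    simpa [this, expTaylor] using hasDerivAt_const x (1 : ℝ)
  | succ n ih =>
    rw [show expTaylor (n + 2) = fun y => expTaylor (n + 1) y + y ^ (n + 1) / (n + 1)! from
      funext (expTaylor_succ _)]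
    refine (ih.add ((hasDerivAt_pow (n + 1) x).div_const ((n + 1)! : ℝ))).congr_deriv ?_
    rw [expTaylor_succ, Nat.factorial_succ, Nat.add_sub_cancel]
    push_cast
    field_simp

lemma nonneg_of_hasDerivAt_of_sign {f f' : ℝ → ℝ} (hf : ∀ x, HasDerivAt f (f' x) x)
    (hf₀ : f 0 = 0) (hneg : ∀ x ≤ 0, f' x ≤ 0) (hpos : ∀ x, 0 ≤ x → 0 ≤ f' x) (x : ℝ) :
    0 ≤ f x := by
  have hcont : Continuous f := continuous_iff_continuousAt.2 fun x => (hf x).continuousAt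
  rcases le_total x 0 with hx | hx
  · have : AntitoneOn f (Set.Iic 0) :=
      antitoneOn_of_hasDerivWithinAt_nonpos (convex_Iic 0) hcont.continuousOn
        (fun y _ => (hf y).hasDerivWithinAt)
        fun y hy => hneg y (interior_subset hy : y ∈ Set.Iic 0)
    simpa [hf₀] using this hx Set.self_mem_Iic hx
  · have : MonotoneOn f (Set.Ici 0) :=
      monotoneOn_of_hasDerivWithinAt_nonneg (convex_Ici 0) hcont.continuousOn
        (fun y _ => (hf y).hasDerivWithinAt)
        fun y hy => hpos y (interior_subset hy : y ∈ Set.Ici 0)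
    simpa [hf₀] using this Set.self_mem_Ici hx hx

/-- The remainder `exp - expTaylor (2k+3)` is monotone with a zero at `0`, so it has the sign
of `x`; hence the next remainder `exp - expTaylor (2k+4)`, its antiderivative, is minimal at `0`. -/
theorem expTaylor_odd_le_exp (k : ℕ) (x : ℝ) : expTaylor (2 * k + 2) x ≤ exp x := by
  induction k generalizing x with
  | zero => simpa [expTaylor, sum_range_succ, add_comm] using add_one_le_exp x
  | succ k ih =>
    have hrem : ∀ n y, HasDerivAt (fun y => exp y - expTaylor (n + 1) y)
        (exp y - expTaylor n y) y := fun n y => (hasDerivAt_exp y).sub (hasDerivAt_expTaylor n y)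
    have hrem₀ : ∀ n, exp 0 - expTaylor (n + 1) 0 = 0 := fun n => by
      rw [expTaylor_succ_zero, exp_zero, sub_self]
    have hmono : Monotone fun y => exp y - expTaylor (2 * k + 3) y :=
      monotone_of_hasDerivAt_nonneg (hrem _) fun y => sub_nonneg.2 (ih y)
    exact sub_nonneg.1 <| nonneg_of_hasDerivAt_of_sign (hrem (2 * k + 3)) (hrem₀ _)
      (fun y hy => hrem₀ (2 * k + 2) ▸ hmono hy) (fun y hy => hrem₀ (2 * k + 2) ▸ hmono hy) x

lemma two_mul_cosh_le_inv_expTaylor (k : ℕ) {x : ℝ} (hpos : 0 < expTaylor (2 * k + 2) x)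
    (hneg : 0 < expTaylor (2 * k + 2) (-x)) :
    2 * cosh x ≤ (expTaylor (2 * k + 2) x)⁻¹ + (expTaylor (2 * k + 2) (-x))⁻¹ := by
  have bound : ∀ y, 0 < expTaylor (2 * k + 2) y → exp (-y) ≤ (expTaylor (2 * k + 2) y)⁻¹ :=
    fun y hy => by
      rw [exp_neg]
      exact inv_anti₀ hy (expTaylor_odd_le_exp k y)
  rw [cosh_eq, mul_div_cancel₀ _ two_ne_zero, add_comm]
  exact add_le_add (bound x hpos) (by simpa using bound (-x) hneg)

/-- Reduces an upper bound on `cosh x` to a rational computation that `norm_num` can check. -/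
lemma cosh_lt_of_expTaylor {x y b : ℝ} (hxy : |x| ≤ y)
    (h : 0 < expTaylor 10 y ∧ 0 < expTaylor 10 (-y) ∧
      (expTaylor 10 y)⁻¹ + (expTaylor 10 (-y))⁻¹ < 2 * b) : cosh x < b := by
  obtain ⟨hpos, hneg, hb⟩ := h
  have := two_mul_cosh_le_inv_expTaylor 4 hpos hneg
  have := cosh_le_cosh.2 (hxy.trans (le_abs_self y))
  linarith

lemma exp_add_exp_of_add_eq_zero {a b : ℝ} (h : a + b = 0) :
    exp a + exp b = 2 * cosh √((a ^ 2 + b ^ 2) / 2) := by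
  obtain rfl : b = -a := by linarith
  rw [show (a ^ 2 + (-a) ^ 2) / 2 = a ^ 2 by ring, sqrt_sq_eq_abs, cosh_abs, cosh_eq]
  ring

lemma exp_add_exp_add_exp_of_power_sums {a b c : ℝ} (h₁ : a + b + c = 0)
    (h₃ : a ^ 3 + b ^ 3 + c ^ 3 = 0) :
    exp a + exp b + exp c = 2 * cosh √((a ^ 2 + b ^ 2 + c ^ 2) / 2) + 1 := by
  have habc : a * b * c = 0 := by
    linear_combination -(a ^ 2 + b ^ 2 + c ^ 2 - a * b - b * c - c * a) / 3 * h₁ + h₃ / 3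
  rcases mul_eq_zero.1 habc with hab | rfl
  · rcases mul_eq_zero.1 hab with rfl | rfl
    · have := exp_add_exp_of_add_eq_zero (show b + c = 0 by linarith)
      norm_num at this ⊢
      linarith
    · have := exp_add_exp_of_add_eq_zero (show a + c = 0 by linarith)
      norm_num at this ⊢
      linarith
  · have := exp_add_exp_of_add_eq_zero (show a + b = 0 by linarith)
    norm_num at this ⊢
    linarith

end Real

lemma Matrix.IsHermitian.trace_pow_eq_sum_eigenvalues_pow {𝕜 ι : Type*} [RCLike 𝕜] [Fintype ι]
    [DecidableEq ι] {A : Matrix ι ι 𝕜} (hA : A.IsHermitian) (k : ℕ) :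
    (A ^ k).trace = ∑ i, (hA.eigenvalues i : 𝕜) ^ k := by
  conv_lhs => rw [hA.spectral_theorem]
  rw [← map_pow, Unitary.conjStarAlgAut_apply, Matrix.trace_mul_cycle,
    Unitary.star_mul_self_of_mem hA.eigenvectorUnitary.2, Matrix.one_mul, Matrix.diagonal_pow,
    Matrix.trace_diagonal]
  simp

namespace SimpleGraph

variable {V : Type*} (G : SimpleGraph V)

section Finite

variable [Fintype V] [DecidableRel G.Adj]

theorem trace_adjMatrix_pow_eq_zero_of_odd {α : Type*} [DecidableEq V] [Semiring α]
    (hG : G.IsBipartite) {k : ℕ} (hk : Odd k) : ((G.adjMatrix α) ^ k).trace = 0 := by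
  refine sum_eq_zero fun v _ => ?_
  rw [Matrix.diag_apply, adjMatrix_pow_apply_eq_card_walk, Fintype.card_eq_zero_iff.2,
    Nat.cast_zero]
  refine ⟨fun ⟨p, hp⟩ => ?_⟩
  have := (p.three_le_chromaticNumber_of_odd_loop (hp ▸ hk)).trans hG.chromaticNumber_le
  norm_num at this

theorem trace_adjMatrix_sq {α : Type*} [DecidableEq V] [Semiring α] :
    ((G.adjMatrix α) ^ 2).trace = 2 * #G.edgeFinset := by
  rw [sq, Matrix.trace]
  simp only [Matrix.diag_apply, adjMatrix_mul_self_apply_self]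
  rw [← Nat.cast_sum, sum_degrees_eq_twice_card_edges]
  push_cast
  rfl

theorem sum_degree_sq_le_trace_adjMatrix_pow_four [DecidableEq V] :
    ∑ v, (G.degree v : ℝ) ^ 2 ≤ ((G.adjMatrix ℝ) ^ 4).trace := by
  set B := G.adjMatrix ℝ ^ 2
  have hB : B.IsSymm := G.isSymm_adjMatrix.pow 2
  rw [show G.adjMatrix ℝ ^ 4 = B * B by rw [← pow_add]]
  refine sum_le_sum fun v _ => ?_
  rw [Matrix.diag_apply, Matrix.mul_apply]
  calc (G.degree v : ℝ) ^ 2 = B v v * B v v := by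
        simp only [B, sq, adjMatrix_mul_self_apply_self]
    _ ≤ ∑ u, B v u * B u v :=
        single_le_sum (f := fun u => B v u * B u v)
          (fun u _ => by rw [hB.apply v u]; exact mul_self_nonneg _) (mem_univ v)

variable {G} in
theorem IsBipartite.four_mul_card_edgeFinset_le (h : G.IsBipartite) :
    4 * #G.edgeFinset ≤ Fintype.card V ^ 2 := by
  classical
  obtain ⟨s, t, hst⟩ := h.exists_isBipartiteWith
  replace hst : G.IsBipartiteWith ↑s.toFinset ↑t.toFinset := by simpa using hst
  have hedges : #G.edgeFinset ≤ #s.toFinset * #t.toFinset := by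
    rw [← isBipartiteWith_sum_degrees_eq_card_edges hst, ← smul_eq_mul, ← sum_const]
    exact sum_le_sum fun v hv => isBipartiteWith_degree_le hst hv
  have hcard : #s.toFinset + #t.toFinset ≤ Fintype.card V := by
    rw [← card_union_of_disjoint (disjoint_coe.1 hst.disjoint)]
    exact card_le_univ _
  nlinarith [sq_nonneg ((#s.toFinset : ℤ) - #t.toFinset)]

theorem Connected.card_le_card_edgeFinset_add_one (hG : G.Connected) :
    Fintype.card V ≤ #G.edgeFinset + 1 := by
  have := hG.card_vert_le_card_edgeSet_add_one
  rwa [Nat.card_eq_fintype_card, Nat.card_eq_fintype_card, ← edgeFinset_card] at this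

end Finite

lemma adj_iff_of_forall_ne_not_adj [Nontrivial V] (hG : G.Connected) {c : V}
    (hc : ∀ u v, u ≠ c → v ≠ c → ¬G.Adj u v) (u v : V) :
    G.Adj u v ↔ u ≠ v ∧ (u = c ∨ v = c) := by
  have hcenter : ∀ v ≠ c, G.Adj c v := fun v hv => by
    obtain ⟨w, hw⟩ := hG.preconnected.exists_adj_of_nontrivial v
    by_cases hwc : w = c
    · exact hwc ▸ hw.symm
    · exact absurd hw (hc v w hv hwc)
  constructor
  · intro h
    refine ⟨h.ne, ?_⟩
    by_contra! hne
    exact hc u v hne.1 hne.2 h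
  · rintro ⟨huv, rfl | rfl⟩
    · exact hcenter v huv.symm
    · exact (hcenter u huv).symm

lemma nonempty_iso_of_adj_iff [DecidableEq V] {H : SimpleGraph V} {c d : V}
    (hG : ∀ u v, G.Adj u v ↔ u ≠ v ∧ (u = c ∨ v = c))
    (hH : ∀ u v, H.Adj u v ↔ u ≠ v ∧ (u = d ∨ v = d)) : Nonempty (G ≃g H) :=
  ⟨⟨Equiv.swap c d, fun {u v} => by simp [hG, hH, Equiv.swap_apply_eq_iff]⟩⟩

variable {G} in
lemma IsBipartite.exists_forall_ne_not_adj [Fintype V] [Nonempty V] (hV : Fintype.card V ≤ 3)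
    (hbip : G.IsBipartite) : ∃ c, ∀ u v, u ≠ c → v ≠ c → ¬G.Adj u v := by
  classical
  obtain ⟨C⟩ := hbip
  obtain ⟨i, hi⟩ : ∃ i : Fin 2, #{v | C v = i} ≤ 1 := by
    by_contra! h
    have hsum := card_eq_sum_card_fiberwise (f := C) (s := univ) (t := univ) (by simp)
    rw [Fin.sum_univ_two, card_univ] at hsum
    have := h 0
    have := h 1
    omega
  obtain ⟨c, hc⟩ : ∃ c, ∀ u ≠ c, C u ≠ i := by
    by_cases hex : ∃ c, C c = i
    · obtain ⟨c, hc⟩ := hex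
      exact ⟨c, fun u hu hui => hu (card_le_one.1 hi u (by simpa) c (by simpa))⟩
    · push Not at hex
      exact ⟨Classical.arbitrary V, fun u _ => hex u⟩
  refine ⟨c, fun u v hu hv huv => C.valid huv ?_⟩
  have := hc u hu
  have := hc v hv
  omega

lemma pathGraph_adj_iff_of_card_le_three {n : ℕ} (hn : 2 ≤ n) (hn3 : n ≤ 3) (u v : Fin n) :
    (pathGraph n).Adj u v ↔ u ≠ v ∧ (u = ⟨1, hn⟩ ∨ v = ⟨1, hn⟩) := by
  simp only [pathGraph_adj, Fin.ext_iff, ne_eq]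
  omega

theorem nonempty_iso_pathGraph_of_card_le_three {n : ℕ} (hn : 2 ≤ n) (hn3 : n ≤ 3)
    (G : SimpleGraph (Fin n)) (hG : G.Connected) (hbip : G.IsBipartite) :
    Nonempty (G ≃g pathGraph n) := by
  have : Nontrivial (Fin n) := Fin.nontrivial_iff_two_le.2 hn
  have : NeZero n := ⟨by omega⟩
  obtain ⟨c, hc⟩ := hbip.exists_forall_ne_not_adj (by simpa using hn3)
  exact nonempty_iso_of_adj_iff G (adj_iff_of_forall_ne_not_adj G hG hc)
    (pathGraph_adj_iff_of_card_le_three hn hn3)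

end SimpleGraph

namespace EstradaIndexPaper

open Real SimpleGraph

theorem two_mul_cosh_two_mul_cos_sub_two_lt {n : ℕ} (hn : 4 ≤ n) :
    2 * cosh (2 * cos (π / (n + 1))) - 2 < (n - 1) + (n - 1) ^ 2 / (6 * n) := by
  obtain rfl | rfl | hn6 : n = 4 ∨ n = 5 ∨ 6 ≤ n := by omega
  · have hφ : 2 * cos (π / ((4 : ℕ) + 1)) = (1 + √5) / 2 := by
      rw [show ((4 : ℕ) : ℝ) + 1 = 5 by norm_num, cos_pi_div_five]
      ring
    have h5 : √5 < 2.24 := by rw [sqrt_lt' (by norm_num)]; norm_num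
    have := cosh_lt_of_expTaylor (x := (1 + √5) / 2) (y := 1.62) (b := 2.65)
      (by rw [abs_of_pos (by positivity)]; linarith)
      (by norm_num [expTaylor, sum_range_succ, Nat.factorial])
    rw [hφ]
    norm_num
    linarith
  · have h3 : 2 * cos (π / ((5 : ℕ) + 1)) = √3 := by
      rw [show ((5 : ℕ) : ℝ) + 1 = 6 by norm_num, cos_pi_div_six]
      ring
    have h3' : √3 < 1.74 := by rw [sqrt_lt' (by norm_num)]; norm_num
    have := cosh_lt_of_expTaylor (x := √3) (y := 1.74) (b := 2.95)
      (by rw [abs_of_pos (by positivity)]; linarith)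
      (by norm_num [expTaylor, sum_range_succ, Nat.factorial])
    rw [h3]
    norm_num
    linarith
  · have hn6' : (6 : ℝ) ≤ n := by exact_mod_cast hn6
    have hq : 2 / 3 ≤ ((n : ℝ) - 1) ^ 2 / (6 * n) := by
      rw [div_le_div_iff₀ (by norm_num) (by positivity)]
      nlinarith
    have := cosh_lt_of_expTaylor (x := 2 * cos (π / (n + 1))) (y := 2) (b := 3.8)
      (by rw [abs_mul, abs_two]; nlinarith [abs_cos_le_one (π / (n + 1))])
      (by norm_num [expTaylor, sum_range_succ, Nat.factorial])
    linarith

lemma two_mul_cos_pi_div_eq_sqrt {n : ℕ} (hn : 2 ≤ n) (hn3 : n ≤ 3) :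
    2 * cos (π / (n + 1)) = √(n - 1) := by
  interval_cases n <;> norm_num [mul_div_cancel₀]

variable {n : ℕ} (G : SimpleGraph (Fin n)) [DecidableRel G.Adj]

lemma sum_eig_pow (k : ℕ) : ∑ i, eig G i ^ k = ((G.adjMatrix ℝ) ^ k).trace := by
  simpa [eig] using ((adjMatrix_isHermitian G).trace_pow_eq_sum_eigenvalues_pow k).symm

lemma sum_expTaylor_eig (k : ℕ) :
    ∑ i, expTaylor k (eig G i) = ∑ j ∈ range k, ((G.adjMatrix ℝ) ^ j).trace / j ! := by
  simp only [expTaylor]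
  rw [sum_comm]
  simp only [← sum_div, sum_eig_pow]

theorem card_add_card_edgeFinset_add_le_EE (hbip : G.IsBipartite) :
    n + #G.edgeFinset + (∑ v, (G.degree v : ℝ) ^ 2) / 24 ≤ EE G := by
  have h := sum_le_sum fun i (_ : i ∈ univ) => expTaylor_odd_le_exp 2 (eig G i)
  rw [sum_expTaylor_eig] at h
  simp only [show 2 * 2 + 2 = 6 from rfl, sum_range_succ, range_zero, sum_empty, pow_zero,
    Matrix.trace_one, Fintype.card_fin, trace_adjMatrix_sq,
    trace_adjMatrix_pow_eq_zero_of_odd G hbip (show Odd 1 by decide),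
    trace_adjMatrix_pow_eq_zero_of_odd G hbip (show Odd 3 by decide),
    trace_adjMatrix_pow_eq_zero_of_odd G hbip (show Odd 5 by decide)] at h
  have h4 := sum_degree_sq_le_trace_adjMatrix_pow_four G
  rw [EE]
  norm_num at h
  linarith

theorem EE_ge_of_connected (hG : G.Connected) (hbip : G.IsBipartite) :
    2 * n - 1 + (n - 1) ^ 2 / (6 * n) ≤ EE G := by
  have hn : (1 : ℝ) ≤ n := by
    have := hG.nonempty
    exact_mod_cast Fin.pos_iff_nonempty.2 this
  have hm : (n : ℝ) - 1 ≤ #G.edgeFinset := by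
    have := hG.card_le_card_edgeFinset_add_one
    rw [Fintype.card_fin] at this
    have : (n : ℝ) ≤ #G.edgeFinset + 1 := by exact_mod_cast this
    linarith
  have hcs : (2 * (#G.edgeFinset : ℝ)) ^ 2 ≤ n * ∑ v, (G.degree v : ℝ) ^ 2 := by
    have := sq_sum_le_card_mul_sum_sq (s := univ) (f := fun v => (G.degree v : ℝ))
    rwa [← Nat.cast_sum, sum_degrees_eq_twice_card_edges, card_univ, Fintype.card_fin,
      Nat.cast_mul, Nat.cast_two] at this
  have hdeg : (n - 1) ^ 2 / (6 * n) ≤ (∑ v, (G.degree v : ℝ) ^ 2) / 24 := by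
    rw [div_le_div_iff₀ (by positivity) (by norm_num)]
    nlinarith [pow_le_pow_left₀ (by linarith) hm 2]
  linarith [card_add_card_edgeFinset_add_le_EE G hbip]

theorem EE_eq_of_card_le_three (hn : 2 ≤ n) (hn3 : n ≤ 3) (hbip : G.IsBipartite) :
    EE G = 2 * cosh √(#G.edgeFinset) + (n - 2) := by
  have h₁ : ∑ i, eig G i = 0 := by simpa using sum_eig_pow G 1
  have h₂ : ∑ i, eig G i ^ 2 = 2 * #G.edgeFinset := by rw [sum_eig_pow, trace_adjMatrix_sq]
  have h₃ : ∑ i, eig G i ^ 3 = 0 := by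
    rw [sum_eig_pow, trace_adjMatrix_pow_eq_zero_of_odd G hbip (by decide)]
  rw [EE]
  interval_cases n
  · simp only [Fin.sum_univ_two] at h₁ h₂ ⊢
    rw [exp_add_exp_of_add_eq_zero h₁, h₂]
    norm_num
  · simp only [Fin.sum_univ_three] at h₁ h₂ h₃ ⊢
    rw [exp_add_exp_add_exp_of_power_sums h₁ h₃, h₂]
    norm_num

theorem stmt15 {n : ℕ} (hn : 2 ≤ n) (G : SimpleGraph (Fin n)) [DecidableRel G.Adj]
    (hG : G.Connected) (hbip : G.Colorable 2) :
    EE G ≥ 2 * Real.cosh (2 * Real.cos (Real.pi / (n + 1))) + ((n : ℝ) - 2) ∧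
    (EE G = 2 * Real.cosh (2 * Real.cos (Real.pi / (n + 1))) + ((n : ℝ) - 2) ↔
      Nonempty (G ≃g SimpleGraph.pathGraph 2) ∨
      Nonempty (G ≃g SimpleGraph.pathGraph 3)) := by
  by_cases hn3 : n ≤ 3
  · have hm : #G.edgeFinset = n - 1 := by
      have hlow := hG.card_le_card_edgeFinset_add_one
      have hup := IsBipartite.four_mul_card_edgeFinset_le hbip
      rw [Fintype.card_fin] at hlow hup
      interval_cases n <;> omega
    have hEE : EE G = 2 * cosh (2 * cos (π / (n + 1))) + (n - 2) := by
      rw [EE_eq_of_card_le_three G hn hn3 hbip, two_mul_cos_pi_div_eq_sqrt hn hn3, hm,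
        Nat.cast_sub (by omega), Nat.cast_one]
    refine ⟨hEE.ge, iff_of_true hEE ?_⟩
    have hiso := nonempty_iso_pathGraph_of_card_le_three hn hn3 G hG hbip
    interval_cases n
    exacts [Or.inl hiso, Or.inr hiso]
  · have hlt : 2 * cosh (2 * cos (π / (n + 1))) + (n - 2) < EE G := by
      linarith [EE_ge_of_connected G hG hbip,
        two_mul_cosh_two_mul_cos_sub_two_lt (n := n) (by omega)]
    refine ⟨hlt.le, iff_of_false hlt.ne' ?_⟩
    rintro (⟨⟨e⟩⟩ | ⟨⟨e⟩⟩) <;> have := Fintype.card_congr e.toEquiv <;> simp at this <;> omega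

end EstradaIndexPaper
end
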